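/- arXiv:2410.03485 — 3 statements merged into one kernel-verified Lean document; each statement's English description precedes it below -/
import Mathlib

section
/- Let K be a field of characteristic p with Carlitz module φ: F_q[T] → K{τ}, extended to φ: F_q(T) → K(τ) where K(τ) is the left division ring of fractions of K{τ}. Then φ(F_q(T)) = {x ∈ K(τ) : xφ(T) = φ(T)x}, i.e., the image of the fraction field under the Carlitz module is exactly the centralizer of φ(T) in K(τ). -/
/-- Multiplication in the twisted polynomial ring `K{τ}` (with `τ a = a^q τ`), where a
twisted polynomial `∑ aᵢ τ^i` is encoded by its coefficient function `ℕ →₀ K`. -/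
noncomputable def tmul {K : Type*} [Field K] (q : ℕ) (f g : ℕ →₀ K) : ℕ →₀ K :=
  f.sum fun i a => g.sum fun j b => Finsupp.single (i + j) (a * b ^ q ^ i)

/-- Powers in the twisted polynomial ring. -/
noncomputable def tpow {K : Type*} [Field K] (q : ℕ) (x : ℕ →₀ K) : ℕ → (ℕ →₀ K)
  | 0 => Finsupp.single 0 1
  | n + 1 => tmul q x (tpow q x n)

/-- The Carlitz module `φ : F_q[T] → K{τ}`, `φ(∑ aᵢ T^i) = ∑ ψ(aᵢ) (ψ(T) + τ)^i`. -/
noncomputable def carlitz {Fq K : Type*} [Field Fq] [Field K] (q : ℕ) (e : Fq →+* K)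
    (t : K) (f : Polynomial Fq) : ℕ →₀ K :=
  f.sum fun i a => e a • tpow q (Finsupp.single 0 t + Finsupp.single 1 1) i

lemma tmul_apply {K : Type*} [Field K] {q : ℕ} (hq0 : q ≠ 0) (f g : ℕ →₀ K) (k : ℕ) :
    tmul q f g k = ∑ i ∈ Finset.range (k+1), f i * (g (k-i)) ^ q ^ i := by
  classical
  rw [tmul, Finsupp.sum_apply]
  have inner : ∀ i : ℕ, ∀ a : K,
      (g.sum fun j b => Finsupp.single (i + j) (a * b ^ q ^ i)) k
        = if i ≤ k then a * (g (k - i)) ^ q ^ i else 0 := by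
    intro i a
    rw [Finsupp.sum_apply]
    simp only [Finsupp.sum, Finsupp.single_apply]
    by_cases hik : i ≤ k
    · rw [if_pos hik]
      have hcoll := Finset.sum_eq_single (s := g.support)
        (f := fun j => if i + j = k then a * (g j) ^ q ^ i else 0) (k - i)
        (fun j _ hj => by
          show (if i + j = k then a * (g j) ^ q ^ i else 0) = 0
          rw [if_neg]; omega)
        (fun h => by
          show (if i + (k - i) = k then a * (g (k - i)) ^ q ^ i else 0) = 0
          have hg : g (k - i) = 0 := Finsupp.notMem_support_iff.mp h
          rw [hg, zero_pow (pow_ne_zero _ hq0), mul_zero, ite_self])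
      rw [hcoll]
      show (if i + (k - i) = k then a * (g (k - i)) ^ q ^ i else 0) = _
      rw [if_pos (by omega)]
    · rw [if_neg hik]
      refine Finset.sum_eq_zero ?_
      intro j _
      rw [if_neg]
      omega
  simp only [Finsupp.sum]
  calc (∑ i ∈ f.support, (g.sum fun j b => Finsupp.single (i + j) (f i * b ^ q ^ i)) k)
      = ∑ i ∈ f.support, (if i ≤ k then f i * (g (k - i)) ^ q ^ i else 0) := by
        exact Finset.sum_congr rfl fun i _ => inner i (f i)
    _ = ∑ i ∈ f.support ∪ Finset.range (k+1),
          (if i ≤ k then f i * (g (k - i)) ^ q ^ i else 0) := by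
        refine Finset.sum_subset Finset.subset_union_left ?_
        intro i hmem hi
        have : f i = 0 := Finsupp.notMem_support_iff.mp hi
        rw [this, zero_mul, ite_self]
    _ = ∑ i ∈ Finset.range (k+1), (if i ≤ k then f i * (g (k-i)) ^ q ^ i else 0) := by
        symm
        refine Finset.sum_subset Finset.subset_union_right ?_
        intro i _ hi
        rw [if_neg]
        simp only [Finset.mem_range] at hi
        omega
    _ = ∑ i ∈ Finset.range (k+1), f i * (g (k-i)) ^ q ^ i := by
        refine Finset.sum_congr rfl fun i hi => ?_
        rw [if_pos (by simp only [Finset.mem_range] at hi; omega)]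

section
variable {K : Type*} [Field K] {q : ℕ}

/-- view a coefficient finsupp as a polynomial to use the degree API -/
noncomputable def pol (f : ℕ →₀ K) : Polynomial K := ⟨AddMonoidAlgebra.ofCoeff f⟩

lemma pol_coeff (f : ℕ →₀ K) (n : ℕ) : (pol f).coeff n = f n := rfl

lemma pol_eq_zero {f : ℕ →₀ K} : pol f = 0 ↔ f = 0 := Polynomial.ofFinsupp_eq_zero.trans AddMonoidAlgebra.ofCoeff_eq_zero

lemma coeff_gt {f : ℕ →₀ K} {n : ℕ} (h : (pol f).natDegree < n) : f n = 0 :=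
  Polynomial.coeff_eq_zero_of_natDegree_lt h

lemma lead_ne_zero {f : ℕ →₀ K} (h : f ≠ 0) : f (pol f).natDegree ≠ 0 := by
  have := Polynomial.leadingCoeff_ne_zero.mpr (fun hh => h (pol_eq_zero.mp hh))
  exact this

lemma tmul_coeff_high (hq0 : q ≠ 0) (f g : ℕ →₀ K) {k : ℕ}
    (h : (pol f).natDegree + (pol g).natDegree < k) : tmul q f g k = 0 := by
  rw [tmul_apply hq0]
  refine Finset.sum_eq_zero fun i _ => ?_
  rcases lt_or_ge (pol f).natDegree i with hi | hi
  · rw [coeff_gt hi, zero_mul]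
  · rw [coeff_gt (f := g) (by omega), zero_pow (pow_ne_zero _ hq0), mul_zero]

lemma tmul_coeff_top (hq0 : q ≠ 0) (f g : ℕ →₀ K) :
    tmul q f g ((pol f).natDegree + (pol g).natDegree)
      = f (pol f).natDegree * (g (pol g).natDegree) ^ q ^ (pol f).natDegree := by
  rw [tmul_apply hq0]
  set nf := (pol f).natDegree
  set ng := (pol g).natDegree
  have hmem : nf ∈ Finset.range (nf + ng + 1) := by
    simp only [Finset.mem_range]; omega
  rw [Finset.sum_eq_single_of_mem nf hmem]
  · have h1 : nf + ng - nf = ng := by omega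
    rw [h1]
  · intro i _ hi
    rcases lt_or_ge nf i with h' | h'
    · rw [coeff_gt h', zero_mul]
    · rw [coeff_gt (f := g) (by omega), zero_pow (pow_ne_zero _ hq0), mul_zero]

lemma tmul_ne_zero (hq0 : q ≠ 0) {f g : ℕ →₀ K} (hf : f ≠ 0) (hg : g ≠ 0) :
    tmul q f g ≠ 0 := by
  intro h
  have := tmul_coeff_top (q := q) hq0 f g
  rw [h, Finsupp.zero_apply] at this
  exact (mul_ne_zero (lead_ne_zero hf) (pow_ne_zero _ (lead_ne_zero hg))) this.symm

lemma tmul_natDegree (hq0 : q ≠ 0) {f g : ℕ →₀ K} (hf : f ≠ 0) (hg : g ≠ 0) :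
    (pol (tmul q f g)).natDegree = (pol f).natDegree + (pol g).natDegree := by
  refine le_antisymm ?_ ?_
  · rw [Polynomial.natDegree_le_iff_coeff_eq_zero]
    intro m hm
    exact tmul_coeff_high hq0 f g hm
  · refine Polynomial.le_natDegree_of_ne_zero (p := pol (tmul q f g)) ?_
    rw [pol_coeff, tmul_coeff_top hq0]
    exact mul_ne_zero (lead_ne_zero hf) (pow_ne_zero _ (lead_ne_zero hg))

lemma tmul_lead (hq0 : q ≠ 0) {f g : ℕ →₀ K} (hf : f ≠ 0) (hg : g ≠ 0) :
    tmul q f g ((pol (tmul q f g)).natDegree)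
      = f (pol f).natDegree * (g (pol g).natDegree) ^ q ^ (pol f).natDegree := by
  rw [tmul_natDegree hq0 hf hg, tmul_coeff_top hq0]

end

section
variable {K : Type*} [Field K] {q : ℕ}

lemma tmul_single_zero_left (hq0 : q ≠ 0) (s : K) (g : ℕ →₀ K) :
    tmul q (Finsupp.single 0 s) g = s • g := by
  ext k
  rw [tmul_apply hq0]
  rw [Finset.sum_eq_single_of_mem 0 (by simp)]
  · simp
  · intro i _ hi
    rw [Finsupp.single_apply, if_neg (by omega), zero_mul]

lemma tmul_single_zero_right (hq0 : q ≠ 0) {s : K} (hs : s ^ q = s) (g : ℕ →₀ K) :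
    tmul q g (Finsupp.single 0 s) = s • g := by
  have hsi : ∀ i : ℕ, s ^ q ^ i = s := by
    intro i
    induction i with
    | zero => simp
    | succ n ih => rw [pow_succ, pow_mul, ih, hs]
  ext k
  rw [tmul_apply hq0]
  rw [Finset.sum_eq_single_of_mem k (by simp)]
  · rw [Nat.sub_self, Finsupp.single_apply, if_pos rfl, hsi, Finsupp.smul_apply,
      smul_eq_mul, mul_comm]
  · intro i hi hik
    rw [Finsupp.single_apply, if_neg (by simp only [Finset.mem_range] at hi; omega),
      zero_pow (pow_ne_zero _ hq0), mul_zero]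

-- the element P = ψ(T) + τ
lemma pol_P (t : K) : pol (Finsupp.single 0 t + Finsupp.single 1 1)
    = Polynomial.X + Polynomial.C t := by
  show (⟨AddMonoidAlgebra.ofCoeff (Finsupp.single 0 t + Finsupp.single 1 1)⟩ : Polynomial K) = _
  rw [AddMonoidAlgebra.ofCoeff_add, Polynomial.ofFinsupp_add]
  rw [AddMonoidAlgebra.ofCoeff_single, AddMonoidAlgebra.ofCoeff_single]
  rw [Polynomial.ofFinsupp_single, Polynomial.ofFinsupp_single]
  rw [Polynomial.monomial_zero_left, ← Polynomial.X_pow_eq_monomial, pow_one]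
  ring

lemma P_ne_zero (t : K) : (Finsupp.single 0 t + Finsupp.single 1 1 : ℕ →₀ K) ≠ 0 := by
  intro h
  have := pol_P t
  rw [(pol_eq_zero (f := Finsupp.single 0 t + Finsupp.single 1 1)).mpr h] at this
  exact Polynomial.X_add_C_ne_zero t this.symm

lemma P_natDegree (t : K) :
    (pol (Finsupp.single 0 t + Finsupp.single 1 1 : ℕ →₀ K)).natDegree = 1 := by
  rw [pol_P]; exact Polynomial.natDegree_X_add_C t

lemma P_lead (t : K) : (Finsupp.single 0 t + Finsupp.single 1 1 : ℕ →₀ K) 1 = 1 := by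
  simp [Finsupp.single_apply]

lemma P_coeff_zero (t : K) : (Finsupp.single 0 t + Finsupp.single 1 1 : ℕ →₀ K) 0 = t := by
  simp [Finsupp.single_apply]

lemma P_coeff_gt (t : K) {j : ℕ} (h : 2 ≤ j) :
    (Finsupp.single 0 t + Finsupp.single 1 1 : ℕ →₀ K) j = 0 := by
  rw [Finsupp.add_apply, Finsupp.single_apply, Finsupp.single_apply, if_neg (by omega),
    if_neg (by omega), add_zero]

lemma tpow_P_ne_zero (hq0 : q ≠ 0) (t : K) (n : ℕ) :
    tpow q (Finsupp.single 0 t + Finsupp.single 1 1) n ≠ 0 ∧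
    (pol (tpow q (Finsupp.single 0 t + Finsupp.single 1 1) n)).natDegree = n ∧
    tpow q (Finsupp.single 0 t + Finsupp.single 1 1) n n = 1 := by
  induction n with
  | zero =>
      refine ⟨fun h => one_ne_zero (α := K) ?_, ?_, ?_⟩
      · have := Finsupp.single_eq_zero.mp h; exact this
      · show (⟨AddMonoidAlgebra.ofCoeff (Finsupp.single 0 (1:K))⟩ : Polynomial K).natDegree = 0
        rw [AddMonoidAlgebra.ofCoeff_single, Polynomial.ofFinsupp_single, Polynomial.monomial_zero_left,
          Polynomial.natDegree_C]
      · simp [tpow]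
  | succ n ih =>
      obtain ⟨h1, h2, h3⟩ := ih
      have hP := P_ne_zero t
      refine ⟨tmul_ne_zero hq0 hP h1, ?_, ?_⟩
      · show (pol (tmul q _ _)).natDegree = n + 1
        rw [tmul_natDegree hq0 hP h1, P_natDegree, h2]; omega
      · show tmul q _ _ (n+1) = 1
        have := tmul_lead hq0 hP h1
        rw [tmul_natDegree hq0 hP h1, P_natDegree, h2, P_lead, h3] at this
        rw [Nat.add_comm n 1, this, one_pow, one_mul]
end


section
variable {K : Type*} [Field K] {q : ℕ}

open scoped Classical in
lemma ndeg_single {s : K} (hs : s ≠ 0) (k : ℕ) :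
    (pol (Finsupp.single k s)).natDegree = k := by
  show (⟨AddMonoidAlgebra.ofCoeff (Finsupp.single k s)⟩ : Polynomial K).natDegree = k
  rw [AddMonoidAlgebra.ofCoeff_single, Polynomial.ofFinsupp_single, Polynomial.natDegree_monomial, if_neg hs]

lemma single_nz {s : K} (hs : s ≠ 0) (k : ℕ) : Finsupp.single k s ≠ 0 := by
  simp [Finsupp.single_eq_zero, hs]

lemma ndeg_smul {s : K} (hs : s ≠ 0) (z : ℕ →₀ K) :
    (pol (s • z)).natDegree = (pol z).natDegree := by
  by_cases hz : z = 0
  · rw [hz, smul_zero]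
  have hsz : s • z ≠ 0 := smul_ne_zero hs hz
  refine le_antisymm ?_ ?_
  · rw [Polynomial.natDegree_le_iff_coeff_eq_zero]
    intro m hm
    rw [pol_coeff, Finsupp.smul_apply, coeff_gt hm, smul_zero]
  · refine Polynomial.le_natDegree_of_ne_zero ?_
    rw [pol_coeff, Finsupp.smul_apply, smul_eq_mul]
    exact mul_ne_zero hs (lead_ne_zero hz)

lemma pol_sub (a b : ℕ →₀ K) : pol (a - b) = pol a - pol b := by
  show (⟨AddMonoidAlgebra.ofCoeff (a - b)⟩ : Polynomial K) = _
  rw [AddMonoidAlgebra.ofCoeff_sub, Polynomial.ofFinsupp_sub]; rfl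

lemma pol_degree_eq {a : ℕ →₀ K} (ha : a ≠ 0) :
    (pol a).degree = ((pol a).natDegree : WithBot ℕ) :=
  Polynomial.degree_eq_natDegree (fun h => ha (pol_eq_zero.mp h))

lemma powq_fix {s : K} (hs : s ^ q = s) (i : ℕ) : s ^ q ^ i = s := by
  induction i with
  | zero => simp
  | succ n ih => rw [pow_succ, pow_mul, ih, hs]

end


section
variable {Fq K : Type*} [Field Fq] [Fintype Fq] [Field K] {q : ℕ} (e : Fq →+* K) (t : K)

lemma carlitz_zero : carlitz q e t 0 = 0 := Polynomial.sum_zero_index _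

lemma carlitz_add (u v : Polynomial Fq) :
    carlitz q e t (u + v) = carlitz q e t u + carlitz q e t v := by
  unfold carlitz
  rw [Polynomial.sum_add_index]
  · intro i; rw [map_zero, zero_smul]
  · intro i b1 b2; rw [map_add, add_smul]

lemma carlitz_monomial (k : ℕ) (a : Fq) :
    carlitz q e t (Polynomial.monomial k a)
      = e a • tpow q (Finsupp.single 0 t + Finsupp.single 1 1) k := by
  unfold carlitz
  rw [Polynomial.sum_monomial_index]
  rw [map_zero, zero_smul]

lemma carlitz_C (a : Fq) : carlitz q e t (Polynomial.C a) = Finsupp.single 0 (e a) := by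
  rw [← Polynomial.monomial_zero_left, carlitz_monomial]
  show e a • Finsupp.single 0 (1:K) = _
  rw [Finsupp.smul_single', mul_one]

lemma carlitz_one : carlitz q e t 1 = Finsupp.single 0 (1:K) := by
  rw [← Polynomial.C_1, carlitz_C, map_one]

lemma carlitz_lead (hq0 : q ≠ 0) {u : Polynomial Fq} (hu : u ≠ 0) :
    carlitz q e t u u.natDegree = e u.leadingCoeff := by
  unfold carlitz
  rw [Polynomial.sum]
  rw [Finset.sum_apply']
  rw [Finset.sum_eq_single_of_mem u.natDegree
    (Polynomial.natDegree_mem_support_of_nonzero hu)]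
  · rw [Finsupp.smul_apply, (tpow_P_ne_zero hq0 t u.natDegree).2.2, smul_eq_mul, mul_one]
    rfl
  · intro i hi hne
    have hile : i ≤ u.natDegree := Polynomial.le_natDegree_of_mem_supp i hi
    have : tpow q (Finsupp.single 0 t + Finsupp.single 1 1) i u.natDegree = 0 := by
      apply coeff_gt
      rw [(tpow_P_ne_zero hq0 t i).2.1]
      omega
    rw [Finsupp.smul_apply, this, smul_zero]

lemma carlitz_ne_zero (hq0 : q ≠ 0) {u : Polynomial Fq} (hu : u ≠ 0) :
    carlitz q e t u ≠ 0 := by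
  intro h
  have := carlitz_lead e t hq0 hu
  rw [h, Finsupp.zero_apply] at this
  exact Polynomial.leadingCoeff_ne_zero.mpr hu (e.injective (this.symm.trans (map_zero e).symm))

lemma exists_fq (hq2 : 2 ≤ q) (hcard : Fintype.card Fq = q) {s : K} (hs : s ^ q = s) :
    ∃ μ : Fq, e μ = s := by
  classical
  set Pl : Polynomial K := Polynomial.X ^ q - Polynomial.X with hPl
  have hdeg : Pl.natDegree = q := by
    rw [hPl, Polynomial.natDegree_sub_eq_left_of_natDegree_lt]
    · exact Polynomial.natDegree_X_pow q
    · rw [Polynomial.natDegree_X, Polynomial.natDegree_X_pow]; omega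
  have hPl0 : Pl ≠ 0 := Polynomial.ne_zero_of_natDegree_gt (n := 0) (by omega)
  have hroot : ∀ a : Fq, Pl.IsRoot (e a) := by
    intro a
    have : (e a) ^ q = e a := by
      rw [← map_pow, ← hcard, FiniteField.pow_card]
    simp [hPl, Polynomial.IsRoot, this]
  have hroots : ∀ a : Fq, e a ∈ Pl.roots.toFinset := by
    intro a
    rw [Multiset.mem_toFinset, Polynomial.mem_roots hPl0]
    exact hroot a
  by_contra hcon
  push_neg at hcon
  have hsub : insert s (Finset.univ.image fun a : Fq => e a) ⊆ Pl.roots.toFinset := by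
    intro x hx
    rcases Finset.mem_insert.mp hx with rfl | hx
    · rw [Multiset.mem_toFinset, Polynomial.mem_roots hPl0]
      simp [hPl, Polynomial.IsRoot, hs]
    · obtain ⟨a, _, rfl⟩ := Finset.mem_image.mp hx
      exact hroots a
  have hcard1 : (insert s (Finset.univ.image fun a : Fq => e a)).card = q + 1 := by
    rw [Finset.card_insert_of_notMem (by
      intro h
      obtain ⟨a, _, ha⟩ := Finset.mem_image.mp h
      exact hcon a ha)]
    rw [Finset.card_image_of_injective _ e.injective, Finset.card_univ, hcard]
  have : q + 1 ≤ q := by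
    calc q + 1 = _ := hcard1.symm
      _ ≤ Pl.roots.toFinset.card := Finset.card_le_card hsub
      _ ≤ Multiset.card Pl.roots := Multiset.toFinset_card_le _
      _ ≤ Pl.natDegree := Polynomial.card_roots' Pl
      _ = q := hdeg
  omega

end


set_option maxHeartbeats 1000000 in
/-- Let `D` be the left division ring of fractions `K(τ)` of `K{τ}`: a division ring with a
multiplicative additive embedding `emb` of `K{τ}` in which every element is a left fraction
`(emb b)⁻¹ * (emb a)`.  The extension `φ(a/b) = φ(b)⁻¹ φ(a)` of the Carlitz module to
`F_q(T)` has image exactly the centralizer of `φ(T) = ψ(T) + τ` in `K(τ)`. -/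
theorem stmt3 {Fq K D : Type*} [Field Fq] [Fintype Fq] [Field K] [DivisionRing D]
    (p m q : ℕ) (hp : p.Prime) [CharP K p] (hq : q = p ^ m) (hm : 1 ≤ m)
    (hcard : Fintype.card Fq = q) (e : Fq →+* K) (t : K)
    (emb : (ℕ →₀ K) → D) (hinj : Function.Injective emb)
    (hadd : ∀ a b, emb (a + b) = emb a + emb b)
    (hmul : ∀ a b, emb (tmul q a b) = emb a * emb b)
    (hone : emb (Finsupp.single 0 1) = 1)
    (hfrac : ∀ x : D, ∃ a b : ℕ →₀ K, b ≠ 0 ∧ emb b * x = emb a) :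
    {x : D | ∃ a b : Polynomial Fq, b ≠ 0 ∧
        x = (emb (carlitz q e t b))⁻¹ * emb (carlitz q e t a)} =
      {x : D | x * emb (Finsupp.single 0 t + Finsupp.single 1 1)
        = emb (Finsupp.single 0 t + Finsupp.single 1 1) * x} := by
  classical
  have hq2 : 2 ≤ q := by
    rw [hq]
    calc 2 ≤ p := hp.two_le
      _ = p ^ 1 := (pow_one p).symm
      _ ≤ p ^ m := Nat.pow_le_pow_right hp.pos hm
  have hq0 : q ≠ 0 := by omega
  set P : ℕ →₀ K := Finsupp.single 0 t + Finsupp.single 1 1 with hPdef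
  set PP : D := emb P with hPPdef
  -- emb is an additive monoid hom
  let E : (ℕ →₀ K) →+ D := AddMonoidHom.mk' emb hadd
  have hE : ∀ z, E z = emb z := fun _ => rfl
  have hzero : emb 0 = 0 := map_zero E
  have hsub : ∀ a b, emb (a - b) = emb a - emb b := map_sub E
  have hne : ∀ {b : ℕ →₀ K}, b ≠ 0 → emb b ≠ 0 := by
    intro b hb h
    exact hb (hinj (h.trans hzero.symm))
  -- scalars with s^q = s commute with everything in emb's image
  have hscal : ∀ {s : K}, s ^ q = s → ∀ z : ℕ →₀ K,
      emb (Finsupp.single 0 s) * emb z = emb z * emb (Finsupp.single 0 s) := by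
    intro s hs z
    rw [← hmul, ← hmul, tmul_single_zero_left hq0, tmul_single_zero_right hq0 hs]
  have hefix : ∀ a : Fq, (e a) ^ q = e a := by
    intro a
    rw [← map_pow, ← hcard, FiniteField.pow_card]
  have htpow : ∀ n, emb (tpow q P n) = PP ^ n := by
    intro n
    induction n with
    | zero => rw [pow_zero]; exact hone
    | succ n ih =>
        rw [pow_succ']
        show emb (tmul q P (tpow q P n)) = _
        rw [hmul, ih]
  have hcarl : ∀ u : Polynomial Fq, emb (carlitz q e t u)
      = ∑ i ∈ u.support, emb (Finsupp.single 0 (e (u.coeff i))) * PP ^ i := by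
    intro u
    show emb (u.sum fun i a => e a • tpow q P i) = _
    rw [Polynomial.sum, ← hE, map_sum E]
    refine Finset.sum_congr rfl fun i _ => ?_
    rw [hE, ← tmul_single_zero_left hq0, hmul, htpow]
  have hcomm : ∀ u : Polynomial Fq,
      emb (carlitz q e t u) * PP = PP * emb (carlitz q e t u) := by
    intro u
    rw [hcarl u, Finset.sum_mul, Finset.mul_sum]
    refine Finset.sum_congr rfl fun i _ => ?_
    rw [mul_assoc, ← pow_succ, ← mul_assoc, ← hscal (hefix (u.coeff i)) P, mul_assoc,
      ← pow_succ']
  have tmul_zero_left : ∀ g : ℕ →₀ K, tmul q 0 g = 0 := fun g => Finsupp.sum_zero_index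
  ext x
  simp only [Set.mem_setOf_eq]
  constructor
  · rintro ⟨a, b, hb, rfl⟩
    have hbne : emb (carlitz q e t b) ≠ 0 := hne (carlitz_ne_zero e t hq0 hb)
    have h1 : Commute (emb P) (emb (carlitz q e t b)) := (hcomm b).symm
    have h2 : Commute (emb P) (emb (carlitz q e t a)) := (hcomm a).symm
    exact (Commute.mul_right h1.inv_right₀ h2).symm.eq
  · intro hx
    by_cases hx0 : x = 0
    · refine ⟨0, 1, one_ne_zero, ?_⟩
      rw [hx0, carlitz_zero, hzero, mul_zero]
    -- the set of denominators of x
    have hTne : {n | ∃ b : ℕ →₀ K, b ≠ 0 ∧ (∃ a, emb b * x = emb a) ∧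
        (pol b).natDegree = n}.Nonempty := by
      obtain ⟨a, b, hb, hba⟩ := hfrac x
      exact ⟨(pol b).natDegree, b, hb, ⟨a, hba⟩, rfl⟩
    obtain ⟨b₀, hb₀ne, hb₀I, hb₀deg⟩ := Nat.sInf_mem hTne
    have hmin : ∀ b : ℕ →₀ K, b ≠ 0 → (∃ a, emb b * x = emb a) →
        (pol b₀).natDegree ≤ (pol b).natDegree := by
      intro b h1 h2
      rw [hb₀deg]
      exact Nat.sInf_le ⟨b, h1, h2, rfl⟩
    -- every denominator is a left multiple of b₀
    have hdiv : ∀ n : ℕ, ∀ b : ℕ →₀ K, (∃ a, emb b * x = emb a) → (pol b).natDegree ≤ n →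
        ∃ u : ℕ →₀ K, emb b = emb u * emb b₀ := by
      intro n
      induction n using Nat.strong_induction_on with
      | _ n IH =>
        intro b hbI hbn
        by_cases hb : b = 0
        · exact ⟨0, by rw [hb, hzero, zero_mul]⟩
        · have hge : (pol b₀).natDegree ≤ (pol b).natDegree := hmin b hb hbI
          set k := (pol b).natDegree - (pol b₀).natDegree with hk
          set s := b (pol b).natDegree / (b₀ (pol b₀).natDegree) ^ q ^ k with hs
          have hsne : s ≠ 0 :=
            div_ne_zero (lead_ne_zero hb) (pow_ne_zero _ (lead_ne_zero hb₀ne))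
          set g := tmul q (Finsupp.single k s) b₀ with hg
          have hgne : g ≠ 0 := tmul_ne_zero hq0 (single_nz hsne k) hb₀ne
          have hgdeg : (pol g).natDegree = (pol b).natDegree := by
            rw [hg, tmul_natDegree hq0 (single_nz hsne k) hb₀ne, ndeg_single hsne]
            omega
          have hglead : g ((pol g).natDegree) = b ((pol b).natDegree) := by
            rw [hg, tmul_lead hq0 (single_nz hsne k) hb₀ne, ndeg_single hsne,
              Finsupp.single_eq_same, hs, div_mul_cancel₀]
            exact pow_ne_zero _ (lead_ne_zero hb₀ne)
          obtain ⟨ab, hab⟩ := hbI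
          obtain ⟨a₀', ha₀'⟩ := hb₀I
          have hgI : ∃ a, emb g * x = emb a := by
            refine ⟨tmul q (Finsupp.single k s) a₀', ?_⟩
            rw [hg, hmul, hmul, mul_assoc, ha₀']
          obtain ⟨ag, hag⟩ := hgI
          have hrI : ∃ a, emb (b - g) * x = emb a :=
            ⟨ab - ag, by rw [hsub, hsub, sub_mul, hab, hag]⟩
          by_cases hr0 : b - g = 0
          · have hbg : b = g := by rwa [sub_eq_zero] at hr0
            exact ⟨Finsupp.single k s, by rw [hbg, hg, hmul]⟩
          · have hdeg2 : (pol (b - g)).degree < (pol b).degree := by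
              rw [pol_sub]
              refine Polynomial.degree_sub_lt ?_ (fun h => hb (pol_eq_zero.mp h)) ?_
              · rw [pol_degree_eq hb, pol_degree_eq hgne, hgdeg]
              · rw [Polynomial.leadingCoeff, Polynomial.leadingCoeff, pol_coeff, pol_coeff]
                exact hglead.symm
            have hnr : (pol (b - g)).natDegree < (pol b).natDegree := by
              refine Polynomial.natDegree_lt_natDegree ?_ hdeg2
              intro h
              rw [pol_sub] at h
              apply hr0
              apply pol_eq_zero.mp
              rw [pol_sub, h]
            obtain ⟨u', hu'⟩ := IH (pol (b - g)).natDegree (by omega) (b - g) hrI le_rfl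
            refine ⟨u' + Finsupp.single k s, ?_⟩
            have hb_eq : emb b = emb (b - g) + emb g := by
              rw [← hadd, sub_add_cancel]
            rw [hb_eq, hu', hadd, add_mul, hg, hmul]
    -- the degree-one element c with b₀ P = c b₀
    obtain ⟨a₀, ha₀⟩ := hb₀I
    have hbPI : ∃ a, emb (tmul q b₀ P) * x = emb a := by
      refine ⟨tmul q a₀ P, ?_⟩
      rw [hmul, hmul, mul_assoc, ← hx, ← mul_assoc, ha₀]
    obtain ⟨c, hc⟩ := hdiv (pol (tmul q b₀ P)).natDegree (tmul q b₀ P) hbPI le_rfl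
    have hcb : tmul q b₀ P = tmul q c b₀ := hinj (by rw [hc, hmul])
    have hcne : c ≠ 0 := by
      intro h
      have h2 := tmul_ne_zero hq0 hb₀ne (P_ne_zero t)
      rw [hcb, h, tmul_zero_left] at h2
      exact h2 rfl
    have hcdeg : (pol c).natDegree = 1 := by
      have h1 := tmul_natDegree hq0 hb₀ne (P_ne_zero t)
      have h2 := tmul_natDegree hq0 hcne hb₀ne
      rw [hcb, h2, P_natDegree] at h1
      omega
    -- the leading-coefficient relation for elements intertwined by c
    have hSlead : ∀ y : ℕ →₀ K, y ≠ 0 → tmul q y P = tmul q c y →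
        y ((pol y).natDegree) = c 1 * (y ((pol y).natDegree)) ^ q := by
      intro y hy hyc
      have hL : tmul q y P ((pol y).natDegree + 1) = y ((pol y).natDegree) := by
        rw [tmul_apply hq0]
        rw [Finset.sum_eq_single_of_mem ((pol y).natDegree)
          (by simp only [Finset.mem_range]; omega)]
        · have h9 : (pol y).natDegree + 1 - (pol y).natDegree = 1 := by omega
          rw [h9, P_lead, one_pow, mul_one]
        · intro i hi hine
          simp only [Finset.mem_range] at hi
          rcases lt_or_ge i ((pol y).natDegree) with h' | h'
          · rw [P_coeff_gt t (by omega), zero_pow (pow_ne_zero _ hq0), mul_zero]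
          · have h8 : i = (pol y).natDegree + 1 := by omega
            have h7 : y ((pol y).natDegree + 1) = 0 := coeff_gt (by omega)
            rw [h8, h7, zero_mul]
      have hR : tmul q c y ((pol y).natDegree + 1)
          = c 1 * (y ((pol y).natDegree)) ^ q := by
        rw [tmul_apply hq0]
        rw [Finset.sum_eq_single_of_mem 1 (by simp only [Finset.mem_range]; omega)]
        · have h9 : (pol y).natDegree + 1 - 1 = (pol y).natDegree := by omega
          rw [h9, pow_one]
        · intro i hi hine
          simp only [Finset.mem_range] at hi
          rcases lt_or_ge i 1 with h' | h'
          · have h8 : i = 0 := by omega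
            have h7 : y ((pol y).natDegree + 1 - 0) = 0 := coeff_gt (by omega)
            rw [h8, h7, zero_pow (pow_ne_zero _ hq0), mul_zero]
          · have h7 : c i = 0 := coeff_gt (by rw [hcdeg]; omega)
            rw [h7, zero_mul]
      rw [hyc, hR] at hL
      exact hL.symm
    -- a₀ is also intertwined by c
    have ha₀S : tmul q a₀ P = tmul q c a₀ := by
      apply hinj
      calc emb (tmul q a₀ P) = emb a₀ * emb P := hmul _ _
        _ = (emb b₀ * x) * emb P := by rw [ha₀]
        _ = emb b₀ * (x * emb P) := mul_assoc _ _ _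
        _ = emb b₀ * (emb P * x) := by rw [hx]
        _ = (emb b₀ * emb P) * x := (mul_assoc _ _ _).symm
        _ = emb (tmul q b₀ P) * x := by rw [hmul]
        _ = emb (tmul q c b₀) * x := by rw [hcb]
        _ = (emb c * emb b₀) * x := by rw [hmul]
        _ = emb c * (emb b₀ * x) := mul_assoc _ _ _
        _ = emb c * emb a₀ := by rw [ha₀]
        _ = emb (tmul q c a₀) := (hmul _ _).symm
    -- a minimal-degree nonzero element intertwined by c
    have hTne2 : {n | ∃ y : ℕ →₀ K, y ≠ 0 ∧ tmul q y P = tmul q c y ∧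
        (pol y).natDegree = n}.Nonempty := ⟨(pol b₀).natDegree, b₀, hb₀ne, hcb, rfl⟩
    obtain ⟨y₀, hy₀ne, hy₀S, hy₀deg⟩ := Nat.sInf_mem hTne2
    have hmin2 : ∀ y : ℕ →₀ K, y ≠ 0 → tmul q y P = tmul q c y →
        (pol y₀).natDegree ≤ (pol y).natDegree := by
      intro y h1 h2
      rw [hy₀deg]
      exact Nat.sInf_le ⟨y, h1, h2, rfl⟩
    have hc1 : c 1 ≠ 0 := by
      intro h
      have h2 := hSlead y₀ hy₀ne hy₀S
      rw [h, zero_mul] at h2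
      exact lead_ne_zero hy₀ne h2
    -- classification: every intertwined element is y₀ * φ(u)
    have hclass : ∀ n : ℕ, ∀ y : ℕ →₀ K, tmul q y P = tmul q c y → (pol y).natDegree ≤ n →
        ∃ u : Polynomial Fq, emb y = emb y₀ * emb (carlitz q e t u) := by
      intro n
      induction n using Nat.strong_induction_on with
      | _ n IH =>
        intro y hyS hyn
        by_cases hy : y = 0
        · exact ⟨0, by rw [hy, carlitz_zero, hzero, mul_zero]⟩
        · have hge := hmin2 y hy hyS
          have hA := hSlead y hy hyS
          have hB := hSlead y₀ hy₀ne hy₀S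
          have hAne : y ((pol y).natDegree) ≠ 0 := lead_ne_zero hy
          have hBne : y₀ ((pol y₀).natDegree) ≠ 0 := lead_ne_zero hy₀ne
          set k := (pol y).natDegree - (pol y₀).natDegree with hk
          set s := y ((pol y).natDegree) / y₀ ((pol y₀).natDegree) with hs
          have hsne : s ≠ 0 := div_ne_zero hAne hBne
          have hsq : s ^ q = s := by
            rw [hs, div_pow, div_eq_div_iff (pow_ne_zero _ hBne) hBne]
            apply mul_left_cancel₀ hc1
            calc c 1 * (y ((pol y).natDegree) ^ q * y₀ ((pol y₀).natDegree))
                = (c 1 * y ((pol y).natDegree) ^ q) * y₀ ((pol y₀).natDegree) := by ring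
              _ = y ((pol y).natDegree) * y₀ ((pol y₀).natDegree) := by rw [← hA]
              _ = y ((pol y).natDegree) * (c 1 * y₀ ((pol y₀).natDegree) ^ q) := by rw [← hB]
              _ = c 1 * (y ((pol y).natDegree) * y₀ ((pol y₀).natDegree) ^ q) := by ring
          obtain ⟨ε, hε⟩ := exists_fq e hq2 hcard hsq
          have heε : e ε ≠ 0 := by rw [hε]; exact hsne
          have hwne : carlitz q e t (Polynomial.monomial k ε) ≠ 0 := by
            rw [carlitz_monomial]
            exact smul_ne_zero heε (tpow_P_ne_zero hq0 t k).1
          have hwdeg : (pol (carlitz q e t (Polynomial.monomial k ε))).natDegree = k := by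
            rw [carlitz_monomial, ndeg_smul heε, (tpow_P_ne_zero hq0 t k).2.1]
          have hwlead : carlitz q e t (Polynomial.monomial k ε) k = e ε := by
            rw [carlitz_monomial]
            rw [Finsupp.smul_apply, (tpow_P_ne_zero hq0 t k).2.2, smul_eq_mul, mul_one]
          set g := tmul q y₀ (carlitz q e t (Polynomial.monomial k ε)) with hg
          have hgne : g ≠ 0 := tmul_ne_zero hq0 hy₀ne hwne
          have hgdeg : (pol g).natDegree = (pol y).natDegree := by
            rw [hg, tmul_natDegree hq0 hy₀ne hwne, hwdeg]
            omega
          have hglead : g ((pol g).natDegree) = y ((pol y).natDegree) := by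
            rw [hg, tmul_lead hq0 hy₀ne hwne, hwdeg, hwlead,
              powq_fix (hefix ε), hε, hs]
            field_simp
          have hgS : tmul q g P = tmul q c g := by
            apply hinj
            calc emb (tmul q g P)
                = (emb y₀ * emb (carlitz q e t (Polynomial.monomial k ε))) * emb P := by
                  rw [hmul, hg, hmul]
              _ = emb y₀ * (emb (carlitz q e t (Polynomial.monomial k ε)) * emb P) :=
                  mul_assoc _ _ _
              _ = emb y₀ * (emb P * emb (carlitz q e t (Polynomial.monomial k ε))) := by
                  rw [hcomm]
              _ = (emb y₀ * emb P) * emb (carlitz q e t (Polynomial.monomial k ε)) :=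
                  (mul_assoc _ _ _).symm
              _ = emb (tmul q y₀ P) * emb (carlitz q e t (Polynomial.monomial k ε)) := by
                  rw [hmul]
              _ = emb (tmul q c y₀) * emb (carlitz q e t (Polynomial.monomial k ε)) := by
                  rw [hy₀S]
              _ = (emb c * emb y₀) * emb (carlitz q e t (Polynomial.monomial k ε)) := by
                  rw [hmul]
              _ = emb c * (emb y₀ * emb (carlitz q e t (Polynomial.monomial k ε))) :=
                  mul_assoc _ _ _
              _ = emb c * emb g := by rw [hg, hmul]
              _ = emb (tmul q c g) := (hmul _ _).symm
          have hrS : tmul q (y - g) P = tmul q c (y - g) := by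
            apply hinj
            calc emb (tmul q (y - g) P) = (emb y - emb g) * emb P := by rw [hmul, hsub]
              _ = emb y * emb P - emb g * emb P := sub_mul _ _ _
              _ = emb (tmul q y P) - emb (tmul q g P) := by rw [hmul y P, hmul g P]
              _ = emb (tmul q c y) - emb (tmul q c g) := by rw [hyS, hgS]
              _ = emb c * emb y - emb c * emb g := by rw [hmul c y, hmul c g]
              _ = emb c * (emb y - emb g) := (mul_sub _ _ _).symm
              _ = emb c * emb (y - g) := by rw [hsub]
              _ = emb (tmul q c (y - g)) := (hmul _ _).symm
          by_cases hr0 : y - g = 0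
          · have hyg : y = g := by rwa [sub_eq_zero] at hr0
            exact ⟨Polynomial.monomial k ε, by rw [hyg, hg, hmul]⟩
          · have hdeg2 : (pol (y - g)).degree < (pol y).degree := by
              rw [pol_sub]
              refine Polynomial.degree_sub_lt ?_ (fun h => hy (pol_eq_zero.mp h)) ?_
              · rw [pol_degree_eq hy, pol_degree_eq hgne, hgdeg]
              · rw [Polynomial.leadingCoeff, Polynomial.leadingCoeff, pol_coeff, pol_coeff]
                exact hglead.symm
            have hnr : (pol (y - g)).natDegree < (pol y).natDegree :=
              Polynomial.natDegree_lt_natDegree (fun h => hr0 (pol_eq_zero.mp h)) hdeg2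
            obtain ⟨u', hu'⟩ := IH (pol (y - g)).natDegree (by omega) (y - g) hrS le_rfl
            refine ⟨u' + Polynomial.monomial k ε, ?_⟩
            have hy_eq : emb y = emb (y - g) + emb g := by rw [← hadd, sub_add_cancel]
            rw [hy_eq, hu', hg, hmul, carlitz_add, hadd, mul_add]
    -- conclude
    obtain ⟨u, hu⟩ := hclass (pol a₀).natDegree a₀ ha₀S le_rfl
    obtain ⟨v, hv⟩ := hclass (pol b₀).natDegree b₀ hcb le_rfl
    have hvne : v ≠ 0 := by
      intro h
      apply hne hb₀ne
      rw [hv, h, carlitz_zero, hzero, mul_zero]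
    have hphiv : emb (carlitz q e t v) ≠ 0 := hne (carlitz_ne_zero e t hq0 hvne)
    have hy₀D : emb y₀ ≠ 0 := hne hy₀ne
    have hvx : emb (carlitz q e t v) * x = emb (carlitz q e t u) := by
      apply mul_left_cancel₀ hy₀D
      calc emb y₀ * (emb (carlitz q e t v) * x)
          = (emb y₀ * emb (carlitz q e t v)) * x := (mul_assoc _ _ _).symm
        _ = emb b₀ * x := by rw [← hv]
        _ = emb a₀ := ha₀
        _ = emb y₀ * emb (carlitz q e t u) := hu
    exact ⟨u, v, hvne, by rw [← hvx, inv_mul_cancel_left₀ hphiv]⟩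
end

section
/- Let K be a differential field with commuting derivations d/dx_1,...,d/dx_k and field of constants C = {c ∈ K : (d/dx_i)c = 0 for all i}. In the left division ring of fractions K(∂_1,...,∂_k) of the differential polynomial ring K[∂_1,...,∂_k], the simultaneous centralizer of all ∂_j equals C(∂_1,...,∂_k): {x ∈ K(∂_1,...,∂_k) : x∂_j = ∂_j x for all 1 ≤ j ≤ k} = C(∂_1,...,∂_k). -/
/-- The element `∑ a_{i⃗} ∂^{i⃗}` of the differential polynomial ring determined by the
finitely supported coefficient function `f`. -/
noncomputable def dmon {K R : Type*} [Field K] [Ring R] {k : ℕ} (ι : K →+* R)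
    (δ : Fin k → R) (f : (Fin k →₀ ℕ) →₀ K) : R :=
  f.sum fun v a => ι a * (List.ofFn fun i => δ i ^ v i).prod

/-!
Clear denominators of `x` by a nonzero `b ∈ K[∂]` whose coefficient vector has the fewest
nonzero entries, normalised so that one of them is `1` (which every `dᵢ` kills). If `x`
commutes with `∂ᵢ`, then `[∂ᵢ, b] = ∑ dᵢ(b_v) ∂^v` clears the denominators of `x` too and has
strictly fewer nonzero coefficients, so it vanishes: `b` has constant coefficients. Then the numerator also commutes
with every `∂ᵢ`, so its coefficients are constant as well.
-/

theorem map_zero_of_leibniz {K : Type*} [NonUnitalNonAssocSemiring K] {D : K → K}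
    (h : ∀ a b, D (a * b) = a * D b + b * D a) : D 0 = 0 := by
  simpa using h 0 0

theorem map_one_of_leibniz {K : Type*} [NonAssocRing K] {D : K → K}
    (h : ∀ a b, D (a * b) = a * D b + b * D a) : D 1 = 0 := by
  simpa using h 1 1

theorem Finsupp.card_support_mapRange_lt {σ M N : Type*} [Zero M] [Zero N] {e : M → N}
    (he : e 0 = 0) {g : σ →₀ M} {v : σ} (hv : v ∈ g.support) (hev : e (g v) = 0) :
    (g.mapRange e he).support.card < g.support.card := by
  classical
  refine lt_of_le_of_lt (Finset.card_le_card fun w hw => ?_) (Finset.card_erase_lt_of_mem hv)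
  have hw' : e (g w) ≠ 0 := by simpa using hw
  refine Finset.mem_erase.mpr ⟨?_, Finsupp.support_mapRange hw⟩
  rintro rfl
  exact hw' hev

theorem exists_ne_zero_forall_deriv_eq_zero {σ κ K : Type*} [Field K] (d : κ → K → K)
    (hd0 : ∀ i, d i 0 = 0) (hd1 : ∀ i, d i 1 = 0) (P : (σ →₀ K) → Prop)
    (hsmul : ∀ (c : K) f, P f → P (c • f))
    (hderiv : ∀ i f, P f → P (f.mapRange (d i) (hd0 i)))
    {f : σ →₀ K} (hf : f ≠ 0) (hPf : P f) :
    ∃ g ≠ 0, P g ∧ ∀ v i, d i (g v) = 0 := by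
  induction hn : f.support.card using Nat.strong_induction_on generalizing f with
  | _ n ih =>
    obtain ⟨v, hv⟩ := Finsupp.support_nonempty_iff.mpr hf
    have hfv : f v ≠ 0 := Finsupp.mem_support_iff.mp hv
    set g := (f v)⁻¹ • f
    have hgv : g v = 1 := inv_mul_cancel₀ hfv
    have hsupp : g.support = f.support := Finsupp.support_smul_eq (inv_ne_zero hfv)
    have hg : g ≠ 0 := fun h => one_ne_zero (hgv.symm.trans (by rw [h, Finsupp.zero_apply]))
    by_cases hconst : ∀ i, g.mapRange (d i) (hd0 i) = 0
    · exact ⟨g, hg, hsmul _ f hPf, fun w i => by simpa using DFunLike.congr_fun (hconst i) w⟩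
    · obtain ⟨i, hi⟩ := not_forall.mp hconst
      refine ih _ ?_ hi (hderiv i g (hsmul _ f hPf)) rfl
      rw [← hn, ← hsupp]
      exact Finsupp.card_support_mapRange_lt (hd0 i) (hsupp ▸ hv) (by rw [hgv, hd1])

section DifferentialPolynomial

variable {K R : Type*} [Field K] [Ring R] {k : ℕ} (ι : K →+* R) (δ : Fin k → R)

theorem dmon_zero : dmon ι δ 0 = 0 :=
  Finsupp.sum_zero_index

theorem dmon_smul (c : K) (f : (Fin k →₀ ℕ) →₀ K) :
    dmon ι δ (c • f) = ι c * dmon ι δ f := by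
  unfold dmon
  rw [Finsupp.sum_smul_index (fun _ => by simp), Finsupp.sum, Finsupp.sum,
    Finset.mul_sum]
  simp only [map_mul, mul_assoc]

theorem dmon_injective (hbasis : ∀ x : R, ∃! f : (Fin k →₀ ℕ) →₀ K, x = dmon ι δ f) :
    Function.Injective (dmon ι δ) :=
  fun _ g h => (hbasis (dmon ι δ g)).unique h.symm rfl

theorem dmon_eq_zero_iff (hbasis : ∀ x : R, ∃! f : (Fin k →₀ ℕ) →₀ K, x = dmon ι δ f)
    {f : (Fin k →₀ ℕ) →₀ K} : dmon ι δ f = 0 ↔ f = 0 := by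
  rw [← dmon_zero ι δ, (dmon_injective ι δ hbasis).eq_iff]

variable {δ}

theorem commute_delta_prod_pow (hδcomm : ∀ i j, δ i * δ j = δ j * δ i) (i : Fin k)
    (v : Fin k →₀ ℕ) : Commute (δ i) (List.ofFn fun l => δ l ^ v l).prod := by
  refine Commute.list_prod_right _ _ fun x hx => ?_
  obtain ⟨l, rfl⟩ := List.mem_ofFn.mp hx
  exact Commute.pow_right (hδcomm i l) _

variable (d : Fin k → K → K)

theorem dmon_mapRange_eq_commutator (hd0 : ∀ i, d i 0 = 0)
    (hδcomm : ∀ i j, δ i * δ j = δ j * δ i) (hδι : ∀ i a, δ i * ι a = ι a * δ i + ι (d i a)) (i : Fin k) (f : (Fin k →₀ ℕ) →₀ K) :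
    dmon ι δ (f.mapRange (d i) (hd0 i)) = δ i * dmon ι δ f - dmon ι δ f * δ i := by
  unfold dmon
  rw [eq_sub_iff_add_eq', Finsupp.sum_mapRange_index (fun _ => by simp),
    Finsupp.sum, Finsupp.sum, Finset.mul_sum, Finset.sum_mul, ← Finset.sum_add_distrib]
  refine Finset.sum_congr rfl fun v _ => ?_
  rw [← mul_assoc, hδι, add_mul, mul_assoc, mul_assoc, (commute_delta_prod_pow hδcomm i v).eq]

theorem commute_delta_dmon_iff (hd0 : ∀ i, d i 0 = 0)
    (hδcomm : ∀ i j, δ i * δ j = δ j * δ i) (hδι : ∀ i a, δ i * ι a = ι a * δ i + ι (d i a))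
    (hbasis : ∀ x : R, ∃! f : (Fin k →₀ ℕ) →₀ K, x = dmon ι δ f)
    (i : Fin k) (f : (Fin k →₀ ℕ) →₀ K) :
    Commute (δ i) (dmon ι δ f) ↔ ∀ v, d i (f v) = 0 := by
  rw [Commute, SemiconjBy, ← sub_eq_zero, ← dmon_mapRange_eq_commutator ι d hd0 hδcomm hδι,
    ← dmon_zero ι δ, (dmon_injective ι δ hbasis).eq_iff, Finsupp.ext_iff]
  simp

end DifferentialPolynomial

section Fractions

variable {R D : Type*} [Ring R] [Ring D] (j : R →+* D) {x : D} {r b s : R}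

theorem map_commutator_mul_eq (hx : Commute x (j r)) (h : j b * x = j s) :
    j (r * b - b * r) * x = j (r * s - s * r) := by
  rw [map_sub, map_sub, map_mul, map_mul, map_mul, map_mul, sub_mul, mul_assoc, h, mul_assoc,
    ← hx.eq, ← mul_assoc, h]

theorem commute_of_map_mul_eq (hj : Function.Injective j) (hb : Commute r b)
    (hx : Commute x (j r)) (h : j b * x = j s) : Commute r s := by
  refine hj ?_
  rw [map_mul, map_mul, ← h, ← mul_assoc, ← map_mul, hb.eq, map_mul, mul_assoc, ← hx.eq,
    mul_assoc]

end Fractions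

theorem stmt12_general {K R D : Type*} [Field K] [Ring R] [DivisionRing D] (k : ℕ)
    (d : Fin k → K → K)
    (hd_mul : ∀ i a b, d i (a * b) = a * d i b + b * d i a)
    (ι : K →+* R)
    (δ : Fin k → R)
    (hδcomm : ∀ i j, δ i * δ j = δ j * δ i)
    (hδι : ∀ i a, δ i * ι a = ι a * δ i + ι (d i a))
    (hbasis : ∀ x : R, ∃! f : (Fin k →₀ ℕ) →₀ K, x = dmon ι δ f)
    (j : R →+* D) (hj : Function.Injective j)
    (hfrac : ∀ x : D, ∃ a b : R, b ≠ 0 ∧ j b * x = j a) :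
    {x : D | ∀ i, x * j (δ i) = j (δ i) * x}
      = {x : D | ∃ a b : R,
          (∃ f : (Fin k →₀ ℕ) →₀ K, (∀ v i, d i (f v) = 0) ∧ a = dmon ι δ f) ∧
          (∃ g : (Fin k →₀ ℕ) →₀ K, (∀ v i, d i (g v) = 0) ∧ b = dmon ι δ g) ∧
          b ≠ 0 ∧ x = (j b)⁻¹ * j a} := by
  have hd0 i := map_zero_of_leibniz (hd_mul i)
  have hcomm_iff := commute_delta_dmon_iff ι d hd0 hδcomm hδι hbasis
  ext x
  constructor
  · intro hx
    obtain ⟨a, b, hb, hab⟩ := hfrac x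
    obtain ⟨f, rfl, -⟩ := hbasis b
    obtain ⟨g, hg, ⟨s, hgs⟩, hgc⟩ := exists_ne_zero_forall_deriv_eq_zero d hd0
      (fun i => map_one_of_leibniz (hd_mul i)) (fun f => ∃ s, j (dmon ι δ f) * x = j s)
      (fun c f ⟨s, hs⟩ => ⟨ι c * s, by rw [dmon_smul, map_mul, mul_assoc, hs, map_mul]⟩)
      (fun i f ⟨s, hs⟩ => ⟨_, by
        rw [dmon_mapRange_eq_commutator ι d hd0 hδcomm hδι]
        exact map_commutator_mul_eq j (hx i) hs⟩)
      (mt (dmon_eq_zero_iff ι δ hbasis).mpr hb) ⟨a, hab⟩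
    obtain ⟨h, rfl, -⟩ := hbasis s
    have hgb : dmon ι δ g ≠ 0 := mt (dmon_eq_zero_iff ι δ hbasis).mp hg
    refine ⟨dmon ι δ h, dmon ι δ g, ⟨h, fun v i => (hcomm_iff i h).mp ?_ v, rfl⟩,
      ⟨g, hgc, rfl⟩, hgb, (eq_inv_mul_iff_mul_eq₀ ((map_ne_zero_iff j hj).mpr hgb)).mpr hgs⟩
    exact commute_of_map_mul_eq j hj ((hcomm_iff i g).mpr (hgc · i)) (hx i) hgs
  · rintro ⟨a, b, ⟨f, hf, rfl⟩, ⟨g, hg, rfl⟩, -, rfl⟩ i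
    have hcomm : ∀ f, (∀ v i, d i (f v) = 0) → Commute (j (δ i)) (j (dmon ι δ f)) :=
      fun f hf => ((hcomm_iff i f).mpr (hf · i)).map j
    exact ((hcomm g hg).inv_right₀.mul_right (hcomm f hf)).symm

/-- Let `K` be a differential field with commuting derivations `d 1, …, d k`, let `R` be the
differential polynomial ring `K[∂_1,…,∂_k]` (axiomatized as in the paper), and let `D` be
the left division ring of fractions `K(∂_1,…,∂_k)` of `R` (axiomatized: `j : R →+* D`
injective and every element of `D` is a left fraction `(j b)⁻¹ (j a)`).  Then the
simultaneous centralizer of the `∂_i` in `D` is `C(∂_1,…,∂_k)`: the set of left fractions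
of elements of `C[∂_1,…,∂_k]`, where `C = {c : K | ∀ i, d i c = 0}` is the field of
constants. -/
theorem stmt12 {K R D : Type*} [Field K] [Ring R] [DivisionRing D] (k : ℕ)
    (d : Fin k → K → K)
    (hd_add : ∀ i a b, d i (a + b) = d i a + d i b)
    (hd_mul : ∀ i a b, d i (a * b) = a * d i b + b * d i a)
    (hd_comm : ∀ i j a, d i (d j a) = d j (d i a))
    (ι : K →+* R) (hι : Function.Injective ι)
    (δ : Fin k → R)
    (hδcomm : ∀ i j, δ i * δ j = δ j * δ i)
    (hδι : ∀ i a, δ i * ι a = ι a * δ i + ι (d i a))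
    (hbasis : ∀ x : R, ∃! f : (Fin k →₀ ℕ) →₀ K, x = dmon ι δ f)
    (j : R →+* D) (hj : Function.Injective j)
    (hfrac : ∀ x : D, ∃ a b : R, b ≠ 0 ∧ j b * x = j a) :
    {x : D | ∀ i, x * j (δ i) = j (δ i) * x}
      = {x : D | ∃ a b : R,
          (∃ f : (Fin k →₀ ℕ) →₀ K, (∀ v i, d i (f v) = 0) ∧ a = dmon ι δ f) ∧
          (∃ g : (Fin k →₀ ℕ) →₀ K, (∀ v i, d i (g v) = 0) ∧ b = dmon ι δ g) ∧
          b ≠ 0 ∧ x = (j b)⁻¹ * j a} :=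
  stmt12_general k d hd_mul ι δ hδcomm hδι hbasis j hj hfrac
end

section
/- Let K be a field of characteristic p, q a power of p, and let φ, ψ: F_q[T] → K{τ} be two Drinfeld modules (F_q-algebra homomorphisms with φ(T), ψ(T) not in K, possibly with different A-field structures). Working inside K(τ), one has K{τ} ∩ ψ(F_q(T)) = ψ(F_q[T]). Consequently, if φ(F_q[T]) \ ψ(F_q[T]) is non-empty, then it is infinite. -/
lemma tmul_apply_s14 {K : Type*} [Field K] (q : ℕ) (f g : ℕ →₀ K) (n : ℕ) :
    tmul q f g n = f.sum fun i a => g.sum fun j b => if i + j = n then a * b ^ q ^ i else 0 := by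
  unfold tmul
  rw [Finsupp.sum_apply]
  refine Finsupp.sum_congr fun i _ => ?_
  rw [Finsupp.sum_apply]
  refine Finsupp.sum_congr fun j _ => ?_
  rw [Finsupp.single_apply]

lemma tmul_top {K : Type*} [Field K] (q : ℕ) (hq : 0 < q) (f g : ℕ →₀ K) (s t : ℕ)
    (hf : ∀ k, s < k → f k = 0) (hg : ∀ k, t < k → g k = 0) :
    tmul q f g (s + t) = f s * g t ^ q ^ s ∧ ∀ k, s + t < k → tmul q f g k = 0 := by
  have hsupf : ∀ i ∈ f.support, i ≤ s := by
    intro i hi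
    by_contra h
    exact Finsupp.mem_support_iff.mp hi (hf i (lt_of_not_ge h))
  have hsupg : ∀ j ∈ g.support, j ≤ t := by
    intro j hj
    by_contra h
    exact Finsupp.mem_support_iff.mp hj (hg j (lt_of_not_ge h))
  constructor
  · rw [tmul_apply_s14]
    rw [Finsupp.sum]
    rw [Finset.sum_eq_single s]
    · rw [Finsupp.sum, Finset.sum_eq_single t]
      · simp
      · intro j hj hjt
        have := lt_of_le_of_ne (hsupg j hj) hjt
        rw [if_neg (by omega : ¬ s + j = s + t)]
      · intro h
        rw [Finsupp.notMem_support_iff.mp h]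
        simp [zero_pow (pow_pos hq s).ne']
    · intro i hi his
      have hile := lt_of_le_of_ne (hsupf i hi) his
      rw [Finsupp.sum]
      refine Finset.sum_eq_zero fun j hj => ?_
      have := hsupg j hj
      rw [if_neg (by omega : ¬ i + j = s + t)]
    · intro h
      rw [Finsupp.notMem_support_iff.mp h]
      rw [Finsupp.sum]
      refine Finset.sum_eq_zero fun j hj => ?_
      simp
  · intro k hk
    rw [tmul_apply_s14, Finsupp.sum]
    refine Finset.sum_eq_zero fun i hi => ?_
    rw [Finsupp.sum]
    refine Finset.sum_eq_zero fun j hj => ?_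
    have := hsupf i hi
    have := hsupg j hj
    rw [if_neg (by omega : ¬ i + j = k)]

lemma finsupp_top {K : Type*} [Field K] (w : ℕ →₀ K) (hw : w ≠ 0) :
    ∃ t, w t ≠ 0 ∧ ∀ k, t < k → w k = 0 := by
  have hne : w.support.Nonempty := Finsupp.support_nonempty_iff.mpr hw
  refine ⟨w.support.max' hne, Finsupp.mem_support_iff.mp (w.support.max'_mem hne), ?_⟩
  intro k hk
  by_contra h
  exact absurd (Finset.le_max' _ k (Finsupp.mem_support_iff.mpr h)) (not_le.mpr hk)

lemma tmul_zero_right {K : Type*} [Field K] (q : ℕ) (f : ℕ →₀ K) : tmul q f 0 = 0 := by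
  unfold tmul
  simp

lemma psi_deg {Fq K : Type*} [Field Fq] [Field K] (q : ℕ) (hq : 0 < q)
    (e : Fq →+* K) (ψ : Polynomial Fq → (ℕ →₀ K))
    (hadd : ∀ a b, ψ (a + b) = ψ a + ψ b)
    (hmul : ∀ a b, ψ (a * b) = tmul q (ψ a) (ψ b))
    (hC : ∀ c : Fq, ψ (Polynomial.C c) = Finsupp.single 0 (e c))
    (hT : ¬ ∃ c : K, ψ Polynomial.X = Finsupp.single 0 c) :
    ∃ d : ℕ, 1 ≤ d ∧ ∀ a : Polynomial Fq, a ≠ 0 →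
      (ψ a) (d * a.natDegree) ≠ 0 ∧ ∀ k, d * a.natDegree < k → ψ a k = 0 := by
  have hXne : ψ Polynomial.X ≠ 0 := by
    intro h
    exact hT ⟨0, by simp [h]⟩
  have hsupne : (ψ Polynomial.X).support.Nonempty := Finsupp.support_nonempty_iff.mpr hXne
  set d := (ψ Polynomial.X).support.max' hsupne with hd
  have hXd : (ψ Polynomial.X) d ≠ 0 :=
    Finsupp.mem_support_iff.mp ((ψ Polynomial.X).support.max'_mem hsupne)
  have hXtop : ∀ k, d < k → (ψ Polynomial.X) k = 0 := by
    intro k hk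
    by_contra h
    exact absurd (Finset.le_max' _ k (Finsupp.mem_support_iff.mpr h)) (not_le.mpr hk)
  have hd1 : 1 ≤ d := by
    by_contra h
    push_neg at h
    interval_cases d
    · refine hT ⟨(ψ Polynomial.X) 0, ?_⟩
      ext k
      rcases Nat.eq_zero_or_pos k with rfl | hk
      · simp
      · rw [hXtop k hk, Finsupp.single_apply, if_neg (by omega)]
  refine ⟨d, hd1, ?_⟩
  have main : ∀ n : ℕ, ∀ a : Polynomial Fq, a ≠ 0 → a.natDegree = n →
      (ψ a) (d * n) ≠ 0 ∧ ∀ k, d * n < k → ψ a k = 0 := by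
    intro n
    induction n with
    | zero =>
      intro a ha h0
      have : a = Polynomial.C (a.coeff 0) := a.eq_C_of_natDegree_eq_zero h0
      have hc : a.coeff 0 ≠ 0 := by
        intro h; rw [h, map_zero] at this; exact ha this
      rw [this, hC]
      constructor
      · simpa using (map_ne_zero_iff e e.injective).mpr hc
      · intro k hk
        rw [Finsupp.single_apply, if_neg (by omega)]
    | succ n ih =>
      intro a ha hdeg
      have hdivne : a.divX ≠ 0 := by
        rw [Ne, Polynomial.divX_eq_zero_iff]
        intro h
        have := congrArg Polynomial.natDegree h
        rw [hdeg] at this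
        simp [Polynomial.natDegree_C] at this
      have hdivdeg : a.divX.natDegree = n := by
        rw [Polynomial.natDegree_divX_eq_natDegree_tsub_one, hdeg]; omega
      obtain ⟨ih1, ih2⟩ := ih a.divX hdivne hdivdeg
      have hrw : ψ a = tmul q (ψ Polynomial.X) (ψ a.divX) + Finsupp.single 0 (e (a.coeff 0)) := by
        conv_lhs => rw [← Polynomial.X_mul_divX_add a]
        rw [hadd, hmul, hC]
      obtain ⟨htop, hvan⟩ := tmul_top q hq (ψ Polynomial.X) (ψ a.divX) d (d * n) hXtop ih2
      have hdn : d * (n + 1) = d + d * n := by ring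
      constructor
      · rw [hrw, Finsupp.add_apply]
        rw [hdn, htop, Finsupp.single_apply, if_neg (by omega), add_zero]
        exact mul_ne_zero hXd (pow_ne_zero _ ih1)
      · intro k hk
        rw [hdn] at hk
        rw [hrw, Finsupp.add_apply, hvan k (by omega), Finsupp.single_apply,
          if_neg (by omega), add_zero]
  exact fun a ha => main a.natDegree a ha rfl

lemma key_lemma {Fq K D : Type*} [Field Fq] [Field K] [DivisionRing D] (q : ℕ) (hq : 0 < q)
    (e : Fq →+* K) (ψ : Polynomial Fq → (ℕ →₀ K))
    (hadd : ∀ a b, ψ (a + b) = ψ a + ψ b)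
    (hmul : ∀ a b, ψ (a * b) = tmul q (ψ a) (ψ b))
    (hC : ∀ c : Fq, ψ (Polynomial.C c) = Finsupp.single 0 (e c))
    (hT : ¬ ∃ c : K, ψ Polynomial.X = Finsupp.single 0 c)
    (emb : (ℕ →₀ K) → D) (hembinj : Function.Injective emb)
    (hembadd : ∀ a b, emb (a + b) = emb a + emb b)
    (hembmul : ∀ a b, emb (tmul q a b) = emb a * emb b)
    (hembone : emb (Finsupp.single 0 1) = 1)
    (a b : Polynomial Fq) (f : ℕ →₀ K) (hb : b ≠ 0)
    (heq : tmul q (ψ b) f = ψ a) : ∃ c, f = ψ c := by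
  obtain ⟨d, hd1, hdg⟩ := psi_deg q hq e ψ hadd hmul hC hT
  have hψ1 : ψ 1 = Finsupp.single 0 1 := by
    have := hC 1
    rwa [map_one, map_one] at this
  have hψne : ∀ c : Polynomial Fq, c ≠ 0 → ψ c ≠ 0 := by
    intro c hc h
    exact (hdg c hc).1 (by rw [h]; rfl)
  have emb0 : emb 0 = 0 := by
    have h := hembadd 0 0
    rw [add_zero] at h
    exact (right_eq_add.mp h)
  have embne : ∀ x : ℕ →₀ K, x ≠ 0 → emb x ≠ 0 := by
    intro x hx h
    exact hx (hembinj (h.trans emb0.symm))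
  have Ψmul : ∀ s t : Polynomial Fq, emb (ψ (s * t)) = emb (ψ s) * emb (ψ t) := by
    intro s t
    rw [hmul, hembmul]
  -- set up gcd
  letI : DecidableEq (Polynomial Fq) := Classical.decEq _
  letI : GCDMonoid (Polynomial Fq) := EuclideanDomain.gcdMonoid _
  set g : Polynomial Fq := GCDMonoid.gcd a b with hgdef
  have hg0 : g ≠ 0 := gcd_ne_zero_of_right hb
  set a' : Polynomial Fq := a / g with ha'def
  set b' : Polynomial Fq := b / g with hb'def
  have ha : a = g * a' := (EuclideanDomain.mul_div_cancel' hg0 (gcd_dvd_left a b)).symm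
  have hbb : b = g * b' := (EuclideanDomain.mul_div_cancel' hg0 (gcd_dvd_right a b)).symm
  have hb'0 : b' ≠ 0 := right_div_gcd_ne_zero hb
  have hcop : IsCoprime a' b' := isCoprime_div_gcd_div_gcd hb
  -- pass to D
  have hD : emb (ψ b) * emb f = emb (ψ a) := by
    rw [← hembmul, heq]
  rw [ha, hbb, Ψmul, Ψmul, mul_assoc] at hD
  have h1 : emb (ψ b') * emb f = emb (ψ a') :=
    mul_left_cancel₀ (embne _ (hψne g hg0)) hD
  obtain ⟨u, v, huv⟩ := hcop
  have hcomm : ∀ s t : Polynomial Fq, emb (ψ s) * emb (ψ t) = emb (ψ t) * emb (ψ s) := by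
    intro s t
    rw [← Ψmul, ← Ψmul, mul_comm s t]
  have hone : emb (ψ b') * (emb (ψ u) * emb f + emb (ψ v)) = 1 := by
    have e1 : emb (ψ (u * a' + v * b')) = 1 := by rw [huv, hψ1, hembone]
    rw [hadd, hembadd, Ψmul, Ψmul] at e1
    calc emb (ψ b') * (emb (ψ u) * emb f + emb (ψ v))
        = emb (ψ b') * emb (ψ u) * emb f + emb (ψ b') * emb (ψ v) := by
          rw [mul_add, mul_assoc]
      _ = emb (ψ u) * emb (ψ b') * emb f + emb (ψ v) * emb (ψ b') := by
          rw [hcomm b' u, hcomm b' v]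
      _ = emb (ψ u) * emb (ψ a') + emb (ψ v) * emb (ψ b') := by
          rw [mul_assoc, h1]
      _ = 1 := e1
  set w : ℕ →₀ K := tmul q (ψ u) f + ψ v with hwdef
  have hw : tmul q (ψ b') w = Finsupp.single 0 1 := by
    apply hembinj
    rw [hembmul, hembadd, hembmul, hembone]
    exact hone
  have hw0 : w ≠ 0 := by
    intro h
    rw [h, tmul_zero_right] at hw
    exact one_ne_zero (Finsupp.single_eq_zero.mp hw.symm)
  obtain ⟨t, hwt, hwtop⟩ := finsupp_top w hw0
  obtain ⟨hb't, hb'top⟩ := hdg b' hb'0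
  obtain ⟨htop, _⟩ := tmul_top q hq (ψ b') w (d * b'.natDegree) t hb'top hwtop
  have hdeg0 : d * b'.natDegree + t = 0 := by
    by_contra h
    rw [hw, Finsupp.single_apply, if_neg (by omega)] at htop
    exact mul_ne_zero hb't (pow_ne_zero _ hwt) htop.symm
  have hb'deg : b'.natDegree = 0 := by
    rcases Nat.eq_zero_of_add_eq_zero_right hdeg0 with h
    exact by
      rcases Nat.mul_eq_zero.mp h with h' | h'
      · omega
      · exact h'
  have hb'C : b' = Polynomial.C (b'.coeff 0) := b'.eq_C_of_natDegree_eq_zero hb'deg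
  have hc0 : b'.coeff 0 ≠ 0 := by
    intro h
    rw [h, map_zero] at hb'C
    exact hb'0 hb'C
  set c₀ : Fq := b'.coeff 0 with hc₀def
  refine ⟨Polynomial.C c₀⁻¹ * a', ?_⟩
  have hfin : emb (ψ (Polynomial.C c₀⁻¹ * a')) = emb f := by
    rw [Ψmul, ← h1, ← mul_assoc, ← Ψmul]
    rw [hb'C]
    rw [← Polynomial.C_mul, inv_mul_cancel₀ hc0, map_one, hψ1, hembone, one_mul]
  exact (hembinj hfin).symm

/-- Let `φ, ψ : F_q[T] → K{τ}` be Drinfeld modules (`F_q`-algebra homomorphisms whose image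
is not contained in `K`), and let `D = K(τ)` be the left division ring of fractions of
`K{τ}`.  Then `K{τ} ∩ ψ(F_q(T)) = ψ(F_q[T])` inside `K(τ)`, and consequently if
`φ(F_q[T]) \ ψ(F_q[T])` is non-empty then it is infinite. -/
theorem stmt14 {Fq K D : Type*} [Field Fq] [Fintype Fq] [Field K] [DivisionRing D]
    (p m q : ℕ) (hp : p.Prime) [CharP K p] (hq : q = p ^ m) (hm : 1 ≤ m)
    (hcard : Fintype.card Fq = q) (e : Fq →+* K)
    (φ ψ : Polynomial Fq → (ℕ →₀ K))
    (hφadd : ∀ a b, φ (a + b) = φ a + φ b)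
    (hφmul : ∀ a b, φ (a * b) = tmul q (φ a) (φ b))
    (hφC : ∀ c : Fq, φ (Polynomial.C c) = Finsupp.single 0 (e c))
    (hφT : ¬ ∃ c : K, φ Polynomial.X = Finsupp.single 0 c)
    (hψadd : ∀ a b, ψ (a + b) = ψ a + ψ b)
    (hψmul : ∀ a b, ψ (a * b) = tmul q (ψ a) (ψ b))
    (hψC : ∀ c : Fq, ψ (Polynomial.C c) = Finsupp.single 0 (e c))
    (hψT : ¬ ∃ c : K, ψ Polynomial.X = Finsupp.single 0 c)
    (emb : (ℕ →₀ K) → D) (hembinj : Function.Injective emb)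
    (hembadd : ∀ a b, emb (a + b) = emb a + emb b)
    (hembmul : ∀ a b, emb (tmul q a b) = emb a * emb b)
    (hembone : emb (Finsupp.single 0 1) = 1)
    (hfrac : ∀ x : D, ∃ a b : ℕ →₀ K, b ≠ 0 ∧ emb b * x = emb a) :
    (Set.range emb ∩ {x : D | ∃ a b : Polynomial Fq, b ≠ 0 ∧
        x = (emb (ψ b))⁻¹ * emb (ψ a)}
      = Set.range (fun f => emb (ψ f))) ∧
    ((Set.range φ \ Set.range ψ).Nonempty → (Set.range φ \ Set.range ψ).Infinite) := by
  have hq0 : 0 < q := hq ▸ pow_pos hp.pos m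
  obtain ⟨dψ, hdψ1, hdψ⟩ := psi_deg q hq0 e ψ hψadd hψmul hψC hψT
  obtain ⟨dφ, hdφ1, hdφ⟩ := psi_deg q hq0 e φ hφadd hφmul hφC hφT
  have hψ0 : ψ 0 = 0 := by
    have h := hψadd 0 0; rw [add_zero] at h; exact (right_eq_add.mp h)
  have hφ0 : φ 0 = 0 := by
    have h := hφadd 0 0; rw [add_zero] at h; exact (right_eq_add.mp h)
  have hψne : ∀ c, c ≠ 0 → ψ c ≠ 0 := fun c hc h => (hdψ c hc).1 (by rw [h]; rfl)
  have hφne : ∀ c, c ≠ 0 → φ c ≠ 0 := fun c hc h => (hdφ c hc).1 (by rw [h]; rfl)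
  have emb0 : emb 0 = 0 := by
    have h := hembadd 0 0
    rw [add_zero] at h
    exact (right_eq_add.mp h)
  have embne : ∀ x : ℕ →₀ K, x ≠ 0 → emb x ≠ 0 := by
    intro x hx h
    exact hx (hembinj (h.trans emb0.symm))
  have hψ1 : ψ 1 = Finsupp.single 0 1 := by
    have := hψC 1
    rwa [map_one, map_one] at this
  have hφinj : Function.Injective φ := by
    intro x y hxy
    by_contra hne
    have h2 : φ x = φ (x - y) + φ y := by
      rw [← hφadd, sub_add_cancel]
    rw [hxy] at h2
    exact hφne _ (sub_ne_zero.mpr hne) (right_eq_add.mp h2)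
  constructor
  · ext x
    simp only [Set.mem_inter_iff, Set.mem_range, Set.mem_setOf_eq]
    constructor
    · rintro ⟨⟨f, rfl⟩, a, b, hb, hx⟩
      have hψbne : emb (ψ b) ≠ 0 := embne _ (hψne b hb)
      have hDeq : emb (ψ b) * emb f = emb (ψ a) := by
        rw [hx, ← mul_assoc, mul_inv_cancel₀ hψbne, one_mul]
      have heq : tmul q (ψ b) f = ψ a := hembinj (by rw [hembmul]; exact hDeq)
      obtain ⟨c, rfl⟩ := key_lemma q hq0 e ψ hψadd hψmul hψC hψT emb hembinj hembadd
        hembmul hembone a b f hb heq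
      exact ⟨c, rfl⟩
    · rintro ⟨c, rfl⟩
      refine ⟨⟨ψ c, rfl⟩, c, 1, one_ne_zero, ?_⟩
      rw [hψ1, hembone, inv_one, one_mul]
  · rintro ⟨x, ⟨g, rfl⟩, hx2⟩
    classical
    have hg0 : g ≠ 0 := by
      intro h; exact hx2 ⟨0, by rw [hψ0, h, hφ0]⟩
    have hgdeg : 1 ≤ g.natDegree := by
      by_contra h
      push_neg at h
      have hgC : g = Polynomial.C (g.coeff 0) := g.eq_C_of_natDegree_eq_zero (by omega)
      exact hx2 ⟨Polynomial.C (g.coeff 0), by rw [hψC, ← hφC, ← hgC]⟩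
    have claim : ∀ k : ℕ, φ (g ^ k) ∈ Set.range ψ → φ (g ^ (k+1)) ∈ Set.range ψ → False := by
      rintro k ⟨s, hs⟩ ⟨t, ht⟩
      have hs0 : s ≠ 0 := by
        intro h
        rw [h, hψ0] at hs
        exact hφne _ (pow_ne_zero _ hg0) hs.symm
      have heq : tmul q (ψ s) (φ g) = ψ t := by
        rw [hs, ← hφmul, ← pow_succ, ht]
      obtain ⟨c, hc⟩ := key_lemma q hq0 e ψ hψadd hψmul hψC hψT emb hembinj hembadd
        hembmul hembone t s (φ g) hs0 heq
      exact hx2 ⟨c, hc.symm⟩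
    set F : ℕ → (ℕ →₀ K) := fun n =>
      if φ (g ^ (2*n+2)) ∈ Set.range ψ then φ (g ^ (2*n+3)) else φ (g ^ (2*n+2)) with hF
    have hFspec : ∀ n, ∃ k, (k = 2*n+2 ∨ k = 2*n+3) ∧ F n = φ (g ^ k) ∧ F n ∉ Set.range ψ := by
      intro n
      by_cases h : φ (g ^ (2*n+2)) ∈ Set.range ψ
      · refine ⟨2*n+3, Or.inr rfl, ?_, ?_⟩
        · simp only [hF, if_pos h]
        · simp only [hF, if_pos h]
          intro hmem
          exact claim (2*n+2) h (by rw [show 2*n+2+1 = 2*n+3 by omega]; exact hmem)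
      · exact ⟨2*n+2, Or.inl rfl, by simp only [hF, if_neg h], by simp only [hF, if_neg h]; exact h⟩
    apply Set.infinite_of_injective_forall_mem (f := F)
    · intro n1 n2 hmm
      obtain ⟨k1, hk1, he1, _⟩ := hFspec n1
      obtain ⟨k2, hk2, he2, _⟩ := hFspec n2
      rw [he1, he2] at hmm
      have hgg := hφinj hmm
      have hdg : (g ^ k1).natDegree = (g ^ k2).natDegree := by rw [hgg]
      rw [Polynomial.natDegree_pow, Polynomial.natDegree_pow] at hdg
      have hk12 : k1 = k2 := Nat.eq_of_mul_eq_mul_right (by omega : 0 < g.natDegree) hdg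
      omega
    · intro n
      obtain ⟨k, hk, he, hnot⟩ := hFspec n
      exact ⟨⟨g ^ k, he.symm⟩, hnot⟩
end
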